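/- In the refereed bisection protocol with hash-chained traces and an injective hash, if the honest party's trace is the true evaluation trace and the final isolated step check accepts exactly the party whose single-step transition a_ℓ = φ(∑_{j∈G_ℓ} w_{jℓ} a_j) holds, then the honest party is never rejected and at most one party can be accepted. -/
import Mathlib

/-- Refereed bisection, final step. Suppose the true trace satisfies the
network equation at the isolated index `ℓ = k+1`, party 1 is honest
(`a1 = a`), the traces agree on all indices `≤ k` (hash-prefix lemma), disagree
at `ℓ`, and all parents of node `ℓ` have indices `≤ k`. Then (1) the honest
party passes the final single-step check, and (2) both parties cannot
simultaneously pass it. -/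
theorem stmt_16 (φ : ℝ → ℝ) (G : ℕ → Finset ℕ) (w : ℕ → ℕ → ℝ)
    (a a1 a2 : ℕ → ℝ) (k ℓ : ℕ) (hℓ : ℓ = k + 1)
    (ha : a ℓ = φ (∑ j ∈ G ℓ, w j ℓ * a j))
    (h1 : ∀ j, a1 j = a j)
    (hpref : ∀ j ≤ k, a1 j = a2 j)
    (hdis : a1 ℓ ≠ a2 ℓ)
    (hpar : ∀ j ∈ G ℓ, j ≤ k) :
    (a1 ℓ = φ (∑ j ∈ G ℓ, w j ℓ * a1 j)) ∧
    ¬((a1 ℓ = φ (∑ j ∈ G ℓ, w j ℓ * a1 j)) ∧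
      (a2 ℓ = φ (∑ j ∈ G ℓ, w j ℓ * a2 j))) := by
  have hs : ∑ j ∈ G ℓ, w j ℓ * a1 j = ∑ j ∈ G ℓ, w j ℓ * a2 j :=
    Finset.sum_congr rfl fun j hj => by rw [hpref j (hpar j hj)]
  have h1' : a1 ℓ = φ (∑ j ∈ G ℓ, w j ℓ * a1 j) := by
    simp only [h1]; exact ha
  exact ⟨h1', fun ⟨hA, hB⟩ => hdis (by rw [hA, hB, hs])⟩
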